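/- arXiv:1305.1619 — 2 statements merged into one kernel-verified Lean document; each statement's English description precedes it below -/
import Mathlib

section
/- The solution φ of Struwe's equation with φ'(r) = 1/√(ln(r/δ)) satisfies the inequality φ'³/(2r) − (1 + φ'²)/φ > 0 on (δ, r₁) for suitable r₁ > δ, provided the integration constant is chosen so that φ is sufficiently large; more precisely, for any r₁ > δ there exists M > 0 such that if φ(δ) ≥ M then φ'(r)³/(2r) > (1 + φ'(r)²)/φ(r) for all r ∈ (δ, r₁). -/
open Real Set

/-- For the solution of Struwe's equation with `φ'(r) = 1/√(ln(r/δ))`, the sufficient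
condition for `i`-convexity `φ'³/(2r) − (1 + φ'²)/φ > 0` holds on `(δ, r₁)` provided the
integration constant (the value `φ(δ)`) is chosen sufficiently large. -/
theorem struwe_inequality (δ : ℝ) (hδ : 0 < δ) (r₁ : ℝ) (hr₁ : δ < r₁) :
    ∃ M > 0, ∀ c : ℝ, M ≤ c →
      ∀ φ : ℝ → ℝ,
        (∀ r, φ r = c + ∫ s in δ..r, 1 / Real.sqrt (Real.log (s / δ))) →
        ∀ r ∈ Ioo δ r₁,
          (1 + (1 / Real.sqrt (Real.log (r / δ))) ^ 2) / φ r <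
            (1 / Real.sqrt (Real.log (r / δ))) ^ 3 / (2 * r) := by
  have hr₁pos : 0 < r₁ := hδ.trans hr₁
  set L₁ := Real.log (r₁ / δ) with hL₁def
  have hL₁ : 0 < L₁ := Real.log_pos ((one_lt_div hδ).mpr hr₁)
  set s₁ := Real.sqrt L₁ with hs₁def
  have hs₁ : 0 < s₁ := Real.sqrt_pos.mpr hL₁
  have hs₁sq : s₁ ^ 2 = L₁ := Real.sq_sqrt hL₁.le
  have hMpos : 0 < 2 * r₁ * (L₁ * s₁ + s₁) + 1 := by
    nlinarith [mul_pos hr₁pos hs₁, mul_pos hr₁pos (mul_pos hL₁ hs₁)]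
  refine ⟨2 * r₁ * (L₁ * s₁ + s₁) + 1, hMpos, ?_⟩
  intro c hc φ hφ r hr
  obtain ⟨hr1, hr2⟩ := hr
  have hrpos : 0 < r := hδ.trans hr1
  have hL : 0 < Real.log (r / δ) := Real.log_pos ((one_lt_div hδ).mpr hr1)
  set s := Real.sqrt (Real.log (r / δ)) with hsdef
  have hs : 0 < s := Real.sqrt_pos.mpr hL
  have hssq : s ^ 2 = Real.log (r / δ) := Real.sq_sqrt hL.le
  have hsle : s ≤ s₁ := by
    apply Real.sqrt_le_sqrt
    apply Real.log_le_log (by positivity)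
    gcongr
  have hint : 0 ≤ ∫ x in δ..r, 1 / Real.sqrt (Real.log (x / δ)) := by
    apply intervalIntegral.integral_nonneg hr1.le
    intro u _
    positivity
  have hφr : 2 * r₁ * (L₁ * s₁ + s₁) + 1 ≤ φ r := by
    rw [hφ r]; linarith
  have hφpos : 0 < φ r := lt_of_lt_of_le hMpos hφr
  have hs₁cube : s₁ ^ 3 = L₁ * s₁ := by
    rw [pow_succ, hs₁sq]
  have h1 : s ^ 3 ≤ s₁ ^ 3 := pow_le_pow_left₀ hs.le hsle 3
  have hkey : (s ^ 2 + 1) * (2 * r) * s < 2 * r₁ * (L₁ * s₁ + s₁) + 1 := by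
    have h2 : 2 * r * (s ^ 3 + s) < 2 * r₁ * (s ^ 3 + s) := by
      have : 0 < s ^ 3 + s := by positivity
      nlinarith
    have h3 : 2 * r₁ * (s ^ 3 + s) ≤ 2 * r₁ * (s₁ ^ 3 + s₁) := by nlinarith
    nlinarith [hs₁cube]
  rw [div_lt_div_iff₀ hφpos (by positivity)]
  have heq : (1 + (1 / s) ^ 2) * (2 * r) = (s ^ 2 + 1) * (2 * r) * s * (1 / s) ^ 3 := by
    field_simp
  rw [heq, mul_comm ((s ^ 2 + 1) * (2 * r) * s) ((1 / s) ^ 3), mul_comm ((1/s)^3) (φ r),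
    mul_comm (φ r) ((1/s)^3)]
  exact mul_lt_mul_of_pos_left (hkey.trans_le hφr) (by positivity)
end

section
/- Let p be a nondegenerate critical point of a smooth function φ: U → ℝ on an open set U ⊆ ℂⁿ whose Levi form is positive definite at p. Then the Morse index of p is at most n. Equivalently: if Q is a real quadratic form on ℂⁿ ≅ ℝ^{2n} such that Q(v) + Q(iv) > 0 for all v ≠ 0, then every subspace of ℝ^{2n} on which Q is negative definite has real dimension at most n. -/
open Complex Module

/-- Multiplication by `I` as an `ℝ`-linear equivalence of `ℂⁿ`. -/
noncomputable def mulIEquiv (n : ℕ) : (Fin n → ℂ) ≃ₗ[ℝ] (Fin n → ℂ) :=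
  (LinearEquiv.smulOfUnit (Units.mk0 (I : ℂ) I_ne_zero)).restrictScalars ℝ

/-- If `Q` is a real quadratic form on `ℂⁿ ≅ ℝ²ⁿ` with `Q(v) + Q(iv) > 0` for all
`v ≠ 0` (the Levi form condition for the Hessian at a critical point of a
`J`-convex function), then every real subspace on which `Q` is negative definite has
dimension at most `n`; i.e. the Morse index is at most `n`. -/
theorem morse_index_le_of_levi_positive (n : ℕ)
    (Q : QuadraticForm ℝ (Fin n → ℂ))
    (hQ : ∀ v : Fin n → ℂ, v ≠ 0 → 0 < Q v + Q (I • v)) :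
    ∀ W : Submodule ℝ (Fin n → ℂ),
      (∀ v ∈ W, v ≠ 0 → Q v < 0) → finrank ℝ W ≤ n := by
  intro W hW
  by_contra h
  push_neg at h
  set J := mulIEquiv n
  have hJ : ∀ v : Fin n → ℂ, J v = I • v := fun v => rfl
  set W' := W.map (J : (Fin n → ℂ) →ₗ[ℝ] (Fin n → ℂ)) with hW'
  have hrk : finrank ℝ W' = finrank ℝ W :=
    LinearEquiv.finrank_map_eq J W
  have htot : finrank ℝ (Fin n → ℂ) = 2 * n := by
    rw [← Module.finrank_mul_finrank ℝ ℂ (Fin n → ℂ), Complex.finrank_real_complex,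
      Module.finrank_fin_fun]
  have hsup : finrank ℝ (W ⊔ W' : Submodule ℝ (Fin n → ℂ)) ≤ 2 * n := by
    rw [← htot]; exact Submodule.finrank_le _
  have hkey := Submodule.finrank_sup_add_finrank_inf_eq W W'
  have hinf : 0 < finrank ℝ (W ⊓ W' : Submodule ℝ (Fin n → ℂ)) := by omega
  have hne : (W ⊓ W' : Submodule ℝ (Fin n → ℂ)) ≠ ⊥ := by
    intro hbot
    rw [hbot, finrank_bot] at hinf
    exact lt_irrefl 0 hinf
  obtain ⟨v, hv, hvne⟩ := Submodule.exists_mem_ne_zero_of_ne_bot hne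
  obtain ⟨hvW, hvW'⟩ := hv
  obtain ⟨w, hwW, hwv⟩ := hvW'
  have hwne : w ≠ 0 := by
    rintro rfl
    simp [hJ] at hwv
    exact hvne hwv.symm
  have hIv : I • v = -w := by
    rw [← hwv]
    change I • (I • w) = -w
    rw [smul_smul, Complex.I_mul_I, neg_smul, one_smul]
  have h1 : Q v < 0 := hW v hvW hvne
  have h2 : Q (I • v) < 0 := by
    rw [hIv, QuadraticMap.map_neg]
    exact hW w hwW hwne
  have := hQ v hvne
  linarith
end
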